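/- arXiv:1909.09417 — 3 statements merged into one kernel-verified Lean document; each statement's English description precedes it below -/
import Mathlib

section
/- Accuracy of the smooth approximation: the distance between the minimizer w° of ∑_k p_k (J_k + R_k) and the minimizer w°_δ of ∑_k p_k (J_k + R_k^δ) satisfies ‖w° − w°_δ‖² ≤ (2δ/λ_L) ∑_k p_k d(r_k°), where r_k° ∈ ∂R_k(w°) are subgradients with ∑_k p_k (∇J_k(w°) + r_k°) = 0. -/
/-!
Strong monotonicity of the aggregate gradient integrates, along the segment from `w0` to `wδ`,
to `F wδ ≥ F w0 + ⟪∇F w0, wδ - w0⟫ + λL/2 ‖wδ - w0‖²` for `F = ∑ p_k J_k`, and stationarity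
turns the linear term into `-∑ p_k ⟪r_k, wδ - w0⟫`. On the regularizer side, `R_k^δ ≤ R_k`
by Fenchel–Young, while testing the supremum defining `R_k^δ wδ` at `u = r_k`, where
`R_k^* r_k = ⟪r_k, w0⟫ - R_k w0`, gives `R_k^δ wδ ≥ R_k w0 + ⟪r_k, wδ - w0⟫ - δ d r_k`.
Comparing the smoothed cost at `wδ` and at `w0` with these bounds leaves
`λL/2 ‖wδ - w0‖² ≤ δ ∑ p_k d r_k`.
-/

open Finset
open scoped InnerProductSpace

theorem add_deriv_add_half_le_of_deriv_sub_ge {φ φ' : ℝ → ℝ} {c : ℝ}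
    (hφ : ∀ t, HasDerivAt φ (φ' t) t) (hφ' : ∀ t, 0 < t → c * t ≤ φ' t - φ' 0) :
    φ 0 + φ' 0 + c / 2 ≤ φ 1 := by
  set χ : ℝ → ℝ := fun t => φ t - φ' 0 * t - c / 2 * t ^ 2
  have hχ : ∀ t, HasDerivAt χ (φ' t - φ' 0 - c * t) t := fun t => by
    have := ((hφ t).sub ((hasDerivAt_id' t).const_mul (φ' 0))).sub
      ((hasDerivAt_pow 2 t).const_mul (c / 2))
    exact this.congr_deriv (by ring)
  have hmono : MonotoneOn χ (Set.Ici 0) := by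
    refine monotoneOn_of_hasDerivWithinAt_nonneg (convex_Ici 0)
      (fun t _ => (hχ t).continuousAt.continuousWithinAt) (fun t _ => (hχ t).hasDerivWithinAt)
      fun t ht => ?_
    rw [interior_Ici] at ht
    linarith [hφ' t ht]
  have h01 : χ 0 ≤ χ 1 := hmono Set.self_mem_Ici (Set.mem_Ici.2 zero_le_one) zero_le_one
  simp only [χ] at h01
  linarith

section Gradient

variable {F : Type*} [NormedAddCommGroup F] [InnerProductSpace ℝ F] [CompleteSpace F]

theorem HasGradientAt.const_mul {f : F → ℝ} {f' x : F} (h : HasGradientAt f f' x) (c : ℝ) :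
    HasGradientAt (fun y => c * f y) (c • f') x := by
  rw [hasGradientAt_iff_hasFDerivAt, map_smul]
  exact h.hasFDerivAt.const_mul c

theorem HasGradientAt.fun_sum {ι : Type*} {s : Finset ι} {g : ι → F → ℝ} {g' : ι → F} {x : F}
    (h : ∀ i ∈ s, HasGradientAt (g i) (g' i) x) :
    HasGradientAt (fun y => ∑ i ∈ s, g i y) (∑ i ∈ s, g' i) x := by
  rw [hasGradientAt_iff_hasFDerivAt, map_sum]
  exact HasFDerivAt.fun_sum fun i hi => (h i hi).hasFDerivAt

theorem add_inner_add_sq_le_of_hasGradientAt {f : F → ℝ} {f' : F → F} {m : ℝ}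
    (hf : ∀ x, HasGradientAt f (f' x) x)
    (hmono : ∀ x y, m * ‖x - y‖ ^ 2 ≤ ⟪x - y, f' x - f' y⟫_ℝ) (x y : F) :
    f x + ⟪f' x, y - x⟫_ℝ + m / 2 * ‖y - x‖ ^ 2 ≤ f y := by
  set v := y - x
  have hline : ∀ t : ℝ, HasDerivAt (fun s : ℝ => x + s • v) v t := fun t => by
    simpa using ((hasDerivAt_id t).smul_const v).const_add x
  have key := add_deriv_add_half_le_of_deriv_sub_ge (c := m * ‖v‖ ^ 2)
    (φ := fun t => f (x + t • v)) (φ' := fun t => ⟪f' (x + t • v), v⟫_ℝ)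
    (fun t => (hf _).hasFDerivAt.comp_hasDerivAt t (hline t)) fun t ht => by
      have h := hmono (x + t • v) x
      simp only [add_sub_cancel_left, norm_smul, mul_pow, Real.norm_eq_abs, sq_abs,
        real_inner_smul_left, inner_sub_right] at h
      simp only [zero_smul, add_zero, real_inner_comm v] at h ⊢
      nlinarith
  simp only [zero_smul, add_zero, one_smul, v, add_sub_cancel] at key
  linarith

end Gradient

section Smoothing

variable {E : Type*} [NormedAddCommGroup E] [InnerProductSpace ℝ E] {R Rs d : E → ℝ} {δ : ℝ}

theorem smoothed_le_self (hRs : ∀ v, IsLUB {t | ∃ u, t = ⟪v, u⟫_ℝ - R u} (Rs v))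
    {w : E} {Rδw : ℝ} (hRδ : IsLUB {t | ∃ u, t = ⟪w, u⟫_ℝ - Rs u - δ * d u} Rδw)
    (hδ : 0 ≤ δ) (hd : ∀ u, 0 ≤ d u) : Rδw ≤ R w := by
  refine hRδ.2 ?_
  rintro _ ⟨u, rfl⟩
  have fenchel_young : ⟪u, w⟫_ℝ - R w ≤ Rs u := (hRs u).1 ⟨w, rfl⟩
  rw [real_inner_comm] at fenchel_young
  nlinarith [mul_nonneg hδ (hd u)]

theorem conjugate_le_of_subgradient {r w₀ : E} {Rsr : ℝ}
    (hRs : IsLUB {t | ∃ u, t = ⟪r, u⟫_ℝ - R u} Rsr) (hr : ∀ x, R w₀ + ⟪r, x - w₀⟫_ℝ ≤ R x) :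
    Rsr ≤ ⟪r, w₀⟫_ℝ - R w₀ := by
  refine hRs.2 ?_
  rintro _ ⟨u, rfl⟩
  have := hr u
  rw [inner_sub_right] at this
  linarith

theorem add_inner_sub_le_smoothed_of_subgradient {r w₀ w : E} {Rδw : ℝ}
    (hRs : IsLUB {t | ∃ u, t = ⟪r, u⟫_ℝ - R u} (Rs r)) (hr : ∀ x, R w₀ + ⟪r, x - w₀⟫_ℝ ≤ R x)
    (hRδ : IsLUB {t | ∃ u, t = ⟪w, u⟫_ℝ - Rs u - δ * d u} Rδw) :
    R w₀ + ⟪r, w - w₀⟫_ℝ - δ * d r ≤ Rδw := by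
  have hmem : ⟪w, r⟫_ℝ - Rs r - δ * d r ≤ Rδw := hRδ.1 ⟨r, rfl⟩
  have hconj := conjugate_le_of_subgradient hRs hr
  rw [inner_sub_right, real_inner_comm w]
  linarith

end Smoothing

theorem stmt_8_general {M N : ℕ}
    (p : Fin N → ℝ) (hp : ∀ k, 0 < p k)
    (J : Fin N → EuclideanSpace ℝ (Fin M) → ℝ)
    (gJ : Fin N → EuclideanSpace ℝ (Fin M) → EuclideanSpace ℝ (Fin M))
    (hJ : ∀ k w, HasGradientAt (J k) (gJ k w) w)
    (lamL : ℝ) (hlamL : 0 < lamL)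
    (hsc : ∀ x y : EuclideanSpace ℝ (Fin M),
      lamL * ‖x - y‖ ^ 2 ≤ (inner ℝ (x - y) (∑ k, p k • (gJ k x - gJ k y)) : ℝ))
    (R : Fin N → EuclideanSpace ℝ (Fin M) → ℝ)
    (d : EuclideanSpace ℝ (Fin M) → ℝ)
    (hd2 : ∀ w, (1 / 2) * ‖w‖ ^ 2 ≤ d w)
    (Rs Rδ : Fin N → EuclideanSpace ℝ (Fin M) → ℝ)
    (hRs : ∀ k (v : EuclideanSpace ℝ (Fin M)),
      IsLUB {t : ℝ | ∃ u, t = (inner ℝ v u : ℝ) - R k u} (Rs k v))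
    (δ : ℝ) (hδ : 0 < δ)
    (hRδ : ∀ k (w : EuclideanSpace ℝ (Fin M)),
      IsLUB {t : ℝ | ∃ u, t = (inner ℝ w u : ℝ) - Rs k u - δ * d u} (Rδ k w))
    (w0 wδ : EuclideanSpace ℝ (Fin M))
    (hwδ : ∀ w, ∑ k, p k * (J k wδ + Rδ k wδ) ≤ ∑ k, p k * (J k w + Rδ k w))
    (r : Fin N → EuclideanSpace ℝ (Fin M))
    (hr : ∀ k x, R k w0 + (inner ℝ (r k) (x - w0) : ℝ) ≤ R k x)
    (hstat : ∑ k, p k • (gJ k w0 + r k) = 0) :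
    ‖w0 - wδ‖ ^ 2 ≤ (2 * δ / lamL) * ∑ k, p k * d (r k) := by
  have hd : ∀ u, 0 ≤ d u := fun u => (by positivity : (0 : ℝ) ≤ 1 / 2 * ‖u‖ ^ 2).trans (hd2 u)
  have hgrowth := add_inner_add_sq_le_of_hasGradientAt (m := lamL)
    (fun w => HasGradientAt.fun_sum fun k _ => (hJ k w).const_mul (p k))
    (fun x y => by simpa only [smul_sub, sum_sub_distrib] using hsc x y) w0 wδ
  have hgrad : ⟪∑ k, p k • gJ k w0, wδ - w0⟫_ℝ = -∑ k, p k * ⟪r k, wδ - w0⟫_ℝ := by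
    have hsum : ∑ k, p k • gJ k w0 = -∑ k, p k • r k :=
      eq_neg_of_add_eq_zero_left (by simpa only [smul_add, sum_add_distrib] using hstat)
    rw [hsum, inner_neg_left, sum_inner]
    simp only [real_inner_smul_left]
  have hupper : ∑ k, p k * Rδ k w0 ≤ ∑ k, p k * R k w0 := sum_le_sum fun k _ =>
    mul_le_mul_of_nonneg_left (smoothed_le_self (hRs k) (hRδ k w0) hδ.le hd) (hp k).le
  have hlower : ∑ k, p k * (R k w0 + ⟪r k, wδ - w0⟫_ℝ - δ * d (r k)) ≤ ∑ k, p k * Rδ k wδ :=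
    sum_le_sum fun k _ => mul_le_mul_of_nonneg_left
      (add_inner_sub_le_smoothed_of_subgradient (hRs k (r k)) (hr k) (hRδ k wδ)) (hp k).le
  have hopt := hwδ w0
  simp only [mul_add, mul_sub, sum_add_distrib, sum_sub_distrib, mul_left_comm (p _) δ,
    ← mul_sum] at hopt hlower
  have hkey : lamL / 2 * ‖wδ - w0‖ ^ 2 ≤ δ * ∑ k, p k * d (r k) := by linarith
  rw [norm_sub_rev, div_mul_eq_mul_div, le_div_iff₀ hlamL]
  linarith

/-- Accuracy of the smooth approximation. With `p k > 0`, `∑ p k = 1`,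
differentiable convex `J k` whose weighted aggregate is `λL`-strongly convex, closed
convex `R k` with conjugates `Rs k`, a `1`-strongly convex proximity function
`d ≥ ½‖·‖²`, smoothed regularizers `Rδ k w = sup_u {⟨w,u⟩ − Rs k u − δ d u}`,
`w0` the minimizer of `∑ p_k (J_k + R_k)` and `wδ` the minimizer of
`∑ p_k (J_k + Rδ_k)`, and subgradients `r k ∈ ∂R_k(w0)` with
`∑ p_k (∇J_k(w0) + r_k) = 0`, it holds that
`‖w0 − wδ‖² ≤ (2δ/λL) ∑ p_k d(r_k)`. -/
theorem stmt_8 {M N : ℕ}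
    (p : Fin N → ℝ) (hp : ∀ k, 0 < p k) (hps : ∑ k, p k = 1)
    (J : Fin N → EuclideanSpace ℝ (Fin M) → ℝ)
    (gJ : Fin N → EuclideanSpace ℝ (Fin M) → EuclideanSpace ℝ (Fin M))
    (hJ : ∀ k w, HasGradientAt (J k) (gJ k w) w)
    (hJconv : ∀ k, ConvexOn ℝ Set.univ (J k))
    (lamL : ℝ) (hlamL : 0 < lamL)
    (hsc : ∀ x y : EuclideanSpace ℝ (Fin M),
      lamL * ‖x - y‖ ^ 2 ≤ (inner ℝ (x - y) (∑ k, p k • (gJ k x - gJ k y)) : ℝ))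
    (R : Fin N → EuclideanSpace ℝ (Fin M) → ℝ)
    (hRconv : ∀ k, ConvexOn ℝ Set.univ (R k))
    (hRcl : ∀ k, LowerSemicontinuous (R k))
    (d : EuclideanSpace ℝ (Fin M) → ℝ)
    (hdconv : StrongConvexOn Set.univ 1 d) (hdcont : Continuous d)
    (hd2 : ∀ w, (1 / 2) * ‖w‖ ^ 2 ≤ d w)
    (Rs Rδ : Fin N → EuclideanSpace ℝ (Fin M) → ℝ)
    (hRs : ∀ k (v : EuclideanSpace ℝ (Fin M)),
      IsLUB {t : ℝ | ∃ u, t = (inner ℝ v u : ℝ) - R k u} (Rs k v))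
    (δ : ℝ) (hδ : 0 < δ)
    (hRδ : ∀ k (w : EuclideanSpace ℝ (Fin M)),
      IsLUB {t : ℝ | ∃ u, t = (inner ℝ w u : ℝ) - Rs k u - δ * d u} (Rδ k w))
    (w0 wδ : EuclideanSpace ℝ (Fin M))
    (hw0 : ∀ w, ∑ k, p k * (J k w0 + R k w0) ≤ ∑ k, p k * (J k w + R k w))
    (hwδ : ∀ w, ∑ k, p k * (J k wδ + Rδ k wδ) ≤ ∑ k, p k * (J k w + Rδ k w))
    (r : Fin N → EuclideanSpace ℝ (Fin M))
    (hr : ∀ k x, R k w0 + (inner ℝ (r k) (x - w0) : ℝ) ≤ R k x)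
    (hstat : ∑ k, p k • (gJ k w0 + r k) = 0) :
    ‖w0 - wδ‖ ^ 2 ≤ (2 * δ / lamL) * ∑ k, p k * d (r k) :=
  stmt_8_general p hp J gJ hJ lamL hlamL hsc R d hd2 Rs Rδ hRs δ hδ hRδ w0 wδ hwδ r hr hstat
end

section
/- The difference of aggregate cost values satisfies the upper bound F(w°) − F^δ(w°_δ) ≤ δ ∑_k p_k d(r_k°), where r_k° ∈ ∂R_k(w°) satisfy ∑_k p_k (∇J_k(w°) + r_k°) = 0. -/
/-!
Fenchel–Young along the subgradients `r k`: since `r k ∈ ∂R_k(w0)`, the conjugate is attained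
at `w0`, so `R_k^*(r_k) = ⟪r_k, w0⟫ - R_k(w0)`, and testing the supremum defining `Rδ_k(w)` at
`u = r_k` gives `Rδ_k(w) ≥ R_k(w0) + ⟪r_k, w - w0⟫ - δ d(r_k)`. Adding the gradient inequality
for `J_k` and averaging with the weights `p_k`, the linear terms add up to
`⟪∑ p_k (∇J_k(w0) + r_k), w - w0⟫ = 0`.
Hence `F(w0) ≤ F^δ(w) + δ ∑ p_k d(r_k)` for every `w`, in particular for `w = wδ`.
-/

open Finset

theorem ConvexOn.add_fderiv_sub_le {E : Type*} [NormedAddCommGroup E] [NormedSpace ℝ E]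
    {f : E → ℝ} {f' : E →L[ℝ] ℝ} {x : E} (hf : ConvexOn ℝ Set.univ f) (hf' : HasFDerivAt f f' x)
    (y : E) : f x + f' (y - x) ≤ f y := by
  have hline : HasDerivAt (AffineMap.lineMap x y : ℝ → E) (y - x) 0 :=
    AffineMap.hasDerivAt_lineMap
  have hderiv : HasDerivAt (fun t : ℝ => f (AffineMap.lineMap x y t)) (f' (y - x)) 0 := by
    have hf0 : HasFDerivAt f f' (AffineMap.lineMap x y (0 : ℝ)) := by simpa using hf'
    exact hf0.comp_hasDerivAt 0 hline
  have hconv : ConvexOn ℝ Set.univ (fun t : ℝ => f (AffineMap.lineMap x y t)) := by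
    have := hf.comp_affineMap (AffineMap.lineMap x y)
    rwa [Set.preimage_univ] at this
  have hslope := hconv.le_slope_of_hasDerivAt (Set.mem_univ 0) (Set.mem_univ 1) one_pos hderiv
  simp only [slope_def_field, AffineMap.lineMap_apply_zero, AffineMap.lineMap_apply_one,
    sub_zero, div_one] at hslope
  linarith

section InnerProductSpace

variable {E : Type*} [NormedAddCommGroup E] [InnerProductSpace ℝ E]

theorem ConvexOn.add_inner_gradient_sub_le [CompleteSpace E] {f : E → ℝ} {g x : E}
    (hf : ConvexOn ℝ Set.univ f) (hg : HasGradientAt f g x) (y : E) :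
    f x + inner ℝ g (y - x) ≤ f y := by
  simpa using hf.add_fderiv_sub_le hg.hasFDerivAt y

theorem le_inner_sub_of_isLUB_conjugate_of_subgradient {R : E → ℝ} {v w0 : E} {s : ℝ}
    (hs : IsLUB {t : ℝ | ∃ u, t = inner ℝ v u - R u} s)
    (hv : ∀ x, R w0 + inner ℝ v (x - w0) ≤ R x) : s ≤ inner ℝ v w0 - R w0 := by
  refine hs.2 ?_
  rintro t ⟨u, rfl⟩
  have := hv u
  rw [inner_sub_right] at this
  linarith

theorem add_inner_sub_sub_le_of_isLUB_smoothing {R Rs d : E → ℝ} {δ s : ℝ} {v w0 w : E}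
    (hRs : IsLUB {t : ℝ | ∃ u, t = inner ℝ v u - R u} (Rs v))
    (hv : ∀ x, R w0 + inner ℝ v (x - w0) ≤ R x)
    (hs : IsLUB {t : ℝ | ∃ u, t = inner ℝ w u - Rs u - δ * d u} s) :
    R w0 + inner ℝ v (w - w0) - δ * d v ≤ s := by
  have hconj := le_inner_sub_of_isLUB_conjugate_of_subgradient hRs hv
  have htest := hs.1 ⟨v, rfl⟩
  rw [real_inner_comm v w] at htest
  rw [inner_sub_right]
  linarith

end InnerProductSpace

theorem stmt_10_general {M N : ℕ}
    (p : Fin N → ℝ) (hp : ∀ k, 0 < p k)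
    (J : Fin N → EuclideanSpace ℝ (Fin M) → ℝ)
    (gJ : Fin N → EuclideanSpace ℝ (Fin M) → EuclideanSpace ℝ (Fin M))
    (hJ : ∀ k w, HasGradientAt (J k) (gJ k w) w)
    (hJconv : ∀ k, ConvexOn ℝ Set.univ (J k))
    (R : Fin N → EuclideanSpace ℝ (Fin M) → ℝ)
    (d : EuclideanSpace ℝ (Fin M) → ℝ)
    (Rs Rδ : Fin N → EuclideanSpace ℝ (Fin M) → ℝ)
    (hRs : ∀ k (v : EuclideanSpace ℝ (Fin M)),
      IsLUB {t : ℝ | ∃ u, t = (inner ℝ v u : ℝ) - R k u} (Rs k v))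
    (δ : ℝ)
    (hRδ : ∀ k (w : EuclideanSpace ℝ (Fin M)),
      IsLUB {t : ℝ | ∃ u, t = (inner ℝ w u : ℝ) - Rs k u - δ * d u} (Rδ k w))
    (w0 wδ : EuclideanSpace ℝ (Fin M))
    (r : Fin N → EuclideanSpace ℝ (Fin M))
    (hr : ∀ k x, R k w0 + (inner ℝ (r k) (x - w0) : ℝ) ≤ R k x)
    (hstat : ∑ k, p k • (gJ k w0 + r k) = 0) :
    (∑ k, p k * (J k w0 + R k w0)) - (∑ k, p k * (J k wδ + Rδ k wδ)) ≤
      δ * ∑ k, p k * d (r k) := by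
  have hagent : ∀ k, J k w0 + R k w0 ≤
      J k wδ + Rδ k wδ + δ * d (r k) - inner ℝ (gJ k w0 + r k) (wδ - w0) := by
    intro k
    have hJk := (hJconv k).add_inner_gradient_sub_le (hJ k w0) wδ
    have hRk := add_inner_sub_sub_le_of_isLUB_smoothing (hRs k (r k)) (hr k) (hRδ k wδ)
    rw [inner_add_left]
    linarith
  have hlinear : ∑ k, p k * inner ℝ (gJ k w0 + r k) (wδ - w0) = 0 := by
    simp only [← real_inner_smul_left, ← sum_inner, hstat, inner_zero_left]
  have hsum : ∑ k, p k * (J k w0 + R k w0) ≤ ∑ k, p k * (J k wδ + Rδ k wδ + δ * d (r k) -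
      inner ℝ (gJ k w0 + r k) (wδ - w0)) :=
    sum_le_sum fun k _ => mul_le_mul_of_nonneg_left (hagent k) (hp k).le
  simp only [mul_sub, mul_add, sum_sub_distrib, sum_add_distrib, hlinear] at hsum
  rw [mul_sum]
  simp only [mul_add, sum_add_distrib, mul_left_comm δ] at hsum ⊢
  linarith

/-- Upper bound on the aggregate cost gap. In the same setting as the
lower bound (`F = ∑ p_k (J_k + R_k)`, `F^δ = ∑ p_k (J_k + Rδ_k)` with conjugate
smoothing, `w0` minimizing `F`, `wδ` minimizing `F^δ`), with subgradients
`r k ∈ ∂R_k(w0)` satisfying `∑ p_k (∇J_k(w0) + r_k) = 0`, one has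
`F(w0) − F^δ(wδ) ≤ δ ∑ p_k d(r_k)`. -/
theorem stmt_10 {M N : ℕ}
    (p : Fin N → ℝ) (hp : ∀ k, 0 < p k) (hps : ∑ k, p k = 1)
    (J : Fin N → EuclideanSpace ℝ (Fin M) → ℝ)
    (gJ : Fin N → EuclideanSpace ℝ (Fin M) → EuclideanSpace ℝ (Fin M))
    (hJ : ∀ k w, HasGradientAt (J k) (gJ k w) w)
    (hJconv : ∀ k, ConvexOn ℝ Set.univ (J k))
    (R : Fin N → EuclideanSpace ℝ (Fin M) → ℝ)
    (hRconv : ∀ k, ConvexOn ℝ Set.univ (R k))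
    (hRcl : ∀ k, LowerSemicontinuous (R k))
    (d : EuclideanSpace ℝ (Fin M) → ℝ)
    (hdconv : StrongConvexOn Set.univ 1 d) (hdcont : Continuous d)
    (hd2 : ∀ w, (1 / 2) * ‖w‖ ^ 2 ≤ d w)
    (Rs Rδ : Fin N → EuclideanSpace ℝ (Fin M) → ℝ)
    (hRs : ∀ k (v : EuclideanSpace ℝ (Fin M)),
      IsLUB {t : ℝ | ∃ u, t = (inner ℝ v u : ℝ) - R k u} (Rs k v))
    (δ : ℝ) (hδ : 0 < δ)
    (hRδ : ∀ k (w : EuclideanSpace ℝ (Fin M)),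
      IsLUB {t : ℝ | ∃ u, t = (inner ℝ w u : ℝ) - Rs k u - δ * d u} (Rδ k w))
    (w0 wδ : EuclideanSpace ℝ (Fin M))
    (hw0 : ∀ w, ∑ k, p k * (J k w0 + R k w0) ≤ ∑ k, p k * (J k w + R k w))
    (hwδ : ∀ w, ∑ k, p k * (J k wδ + Rδ k wδ) ≤ ∑ k, p k * (J k w + Rδ k w))
    (r : Fin N → EuclideanSpace ℝ (Fin M))
    (hr : ∀ k x, R k w0 + (inner ℝ (r k) (x - w0) : ℝ) ≤ R k x)
    (hstat : ∑ k, p k • (gJ k w0 + r k) = 0) :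
    (∑ k, p k * (J k w0 + R k w0)) - (∑ k, p k * (J k wδ + Rδ k wδ)) ≤
      δ * ∑ k, p k * d (r k) :=
  stmt_10_general p hp J gJ hJ hJconv R d Rs Rδ hRs δ hRδ w0 wδ r hr hstat
end

section
/- Inverse scaling of the stability matrix: if Γ(μ) has the asymptotic form I − Γ(μ) = [[μλ_L − O(μ²), −O(μ^{2κ})], [−O(μ^{1+2κ}), (1−ρ) − O(μ^{1+2κ})]] with λ_L > 0, 0 < ρ < 1, 1/4 < κ < 1/2, then (I − Γ(μ))^{−1} [O(μ²), O(μ^{1+2κ})]^T ⪯ [O(μ), O(μ^{1+2κ})]^T for sufficiently small μ, i.e., both components of the limiting error bound are O(μ) and O(μ^{1+2κ}) respectively. -/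
/-!
By Cramer's rule, `det · x = adj(I − Γ(μ)) · b`. For small `μ` the determinant is dominated by
the product of the diagonal entries, `det ≳ λ_L (1 − ρ) μ`, because the off-diagonal product is
`O(μ^{1+4κ}) = O(μ²)` exactly when `κ ≥ 1/4`. The first row of the adjugate applied to `b` is
`O(μ²)` and the second `O(μ^{2+2κ})`; dividing by `det ≳ μ` gives the claim.
-/

open Filter Topology Matrix

theorem Matrix.det_mul_eq_of_mulVec_fin_two {R : Type*} [CommRing R] {p q r s y₀ y₁ : R}
    {x : Fin 2 → R} (h : !![p, -q; -r, s] *ᵥ x = ![y₀, y₁]) :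
    (p * s - q * r) * x 0 = s * y₀ + q * y₁ ∧ (p * s - q * r) * x 1 = p * y₁ + r * y₀ := by
  have h₀ := congrFun h 0
  have h₁ := congrFun h 1
  simp only [mulVec, dotProduct, Fin.sum_univ_two, of_apply, cons_val', cons_val_zero,
    cons_val_one, empty_val', cons_val_fin_one] at h₀ h₁
  constructor
  · linear_combination s * h₀ + q * h₁
  · linear_combination p * h₁ + r * h₀

theorem le_div_mul_of_le_of_mul_le {D x c t K u : ℝ} (hc : 0 < c) (ht : 0 < t) (hD : c * t ≤ D)
    (hK : 0 ≤ K) (hu : 0 ≤ u) (hx : D * x ≤ K * (t * u)) : x ≤ K / c * u := by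
  rcases le_or_gt x 0 with hx₀ | hx₀
  · exact hx₀.trans (by positivity)
  · rw [div_mul_eq_mul_div, le_div_iff₀ hc]
    nlinarith [mul_le_mul_of_nonneg_right hD hx₀.le]

theorem Real.rpow_one_add_two_mul_le_self {μ κ : ℝ} (hμ : 0 < μ) (hμ₁ : μ ≤ 1) (hκ : 0 ≤ κ) :
    μ ^ (1 + 2 * κ) ≤ μ := by
  simpa using Real.rpow_le_rpow_of_exponent_ge hμ hμ₁ (by linarith : (1 : ℝ) ≤ 1 + 2 * κ)

theorem Real.rpow_two_mul_mul_rpow_one_add_two_mul_le_sq {μ κ : ℝ} (hμ : 0 < μ) (hμ₁ : μ ≤ 1)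
    (hκ : 1 / 4 ≤ κ) : μ ^ (2 * κ) * μ ^ (1 + 2 * κ) ≤ μ ^ 2 := by
  rw [← Real.rpow_add hμ, ← Real.rpow_natCast]
  exact Real.rpow_le_rpow_of_exponent_ge hμ hμ₁ (by push_cast; linarith)

/-- The range of step sizes on which the `O(μ²)`, `O(μ^{1+2κ})` and off-diagonal terms of
`I − Γ(μ)` are dominated by the leading ones. -/
structure SmallStep (lamL ρ a11 a12 a21 a22 μ : ℝ) : Prop where
  pos : 0 < μ
  le_one : μ ≤ 1
  a11_mul_le : a11 * μ ≤ lamL / 2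
  a22_mul_le : a22 * μ ≤ (1 - ρ) / 2
  a12_mul_a21_mul_le : a12 * a21 * μ ≤ lamL * (1 - ρ) / 8

theorem eventually_mul_le (a : ℝ) {ε : ℝ} (hε : 0 < ε) : ∀ᶠ μ in 𝓝 (0 : ℝ), a * μ ≤ ε :=
  ((continuous_const_mul a).tendsto' 0 0 (mul_zero a)).eventually (ge_mem_nhds hε)

theorem eventually_smallStep {lamL ρ : ℝ} (hlamL : 0 < lamL) (hρ₁ : ρ < 1)
    (a11 a12 a21 a22 : ℝ) : ∀ᶠ μ in 𝓝[>] 0, SmallStep lamL ρ a11 a12 a21 a22 μ := by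
  have hρ' : 0 < 1 - ρ := by linarith
  filter_upwards [self_mem_nhdsWithin,
    nhdsWithin_le_nhds (ge_mem_nhds one_pos),
    nhdsWithin_le_nhds (eventually_mul_le a11 (by positivity : 0 < lamL / 2)),
    nhdsWithin_le_nhds (eventually_mul_le a22 (by positivity : 0 < (1 - ρ) / 2)),
    nhdsWithin_le_nhds (eventually_mul_le (a12 * a21) (by positivity : 0 < lamL * (1 - ρ) / 8))]
    with μ hμ hμ₁ h11 h22 h12
  exact ⟨hμ, hμ₁, h11, h22, h12⟩

noncomputable def stabilityConstant (lamL ρ a12 a21 C₁ C₂ : ℝ) : ℝ :=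
  ((1 - ρ) * C₁ + a12 * C₂ + lamL * C₂ + a21 * C₁ + 1) / (lamL * (1 - ρ) / 8)

theorem stabilityConstant_pos {lamL ρ a12 a21 C₁ C₂ : ℝ} (hlamL : 0 < lamL) (hρ₁ : ρ < 1)
    (ha12 : 0 ≤ a12) (ha21 : 0 ≤ a21) (hC₁ : 0 ≤ C₁) (hC₂ : 0 ≤ C₂) :
    0 < stabilityConstant lamL ρ a12 a21 C₁ C₂ := by
  have hρ' : 0 < 1 - ρ := by linarith
  unfold stabilityConstant
  positivity

namespace SmallStep

variable {lamL ρ κ a11 a12 a21 a22 C₁ C₂ μ : ℝ}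

theorem half_le_diag₀ (h : SmallStep lamL ρ a11 a12 a21 a22 μ) :
    μ * lamL / 2 ≤ μ * lamL - a11 * μ ^ 2 := by
  nlinarith [mul_le_mul_of_nonneg_left h.a11_mul_le h.pos.le]

theorem half_le_diag₁ (h : SmallStep lamL ρ a11 a12 a21 a22 μ) (hκ : 0 ≤ κ) (ha22 : 0 ≤ a22) :
    (1 - ρ) / 2 ≤ (1 - ρ) - a22 * μ ^ (1 + 2 * κ) := by
  nlinarith [mul_le_mul_of_nonneg_left
    (Real.rpow_one_add_two_mul_le_self h.pos h.le_one hκ) ha22, h.a22_mul_le]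

theorem mul_le_det (h : SmallStep lamL ρ a11 a12 a21 a22 μ) (hlamL : 0 < lamL) (hρ₁ : ρ < 1)
    (hκ : 1 / 4 ≤ κ) (ha12 : 0 ≤ a12) (ha21 : 0 ≤ a21) (ha22 : 0 ≤ a22) :
    lamL * (1 - ρ) / 8 * μ ≤
      (μ * lamL - a11 * μ ^ 2) * ((1 - ρ) - a22 * μ ^ (1 + 2 * κ)) -
        a12 * μ ^ (2 * κ) * (a21 * μ ^ (1 + 2 * κ)) := by
  have hμ := h.pos
  have hdiag : μ * lamL / 2 * ((1 - ρ) / 2) ≤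
      (μ * lamL - a11 * μ ^ 2) * ((1 - ρ) - a22 * μ ^ (1 + 2 * κ)) :=
    mul_le_mul h.half_le_diag₀ (h.half_le_diag₁ (by linarith) ha22)
      (by linarith) (by nlinarith [h.half_le_diag₀])
  have hoff : a12 * μ ^ (2 * κ) * (a21 * μ ^ (1 + 2 * κ)) ≤ a12 * a21 * μ * μ := by
    have := mul_le_mul_of_nonneg_left
      (Real.rpow_two_mul_mul_rpow_one_add_two_mul_le_sq hμ h.le_one hκ) (mul_nonneg ha12 ha21)
    nlinarith
  nlinarith [mul_le_mul_of_nonneg_right h.a12_mul_a21_mul_le hμ.le]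

theorem solution_le (h : SmallStep lamL ρ a11 a12 a21 a22 μ) (hlamL : 0 < lamL) (hρ₁ : ρ < 1)
    (hκ : 1 / 4 ≤ κ) (ha11 : 0 ≤ a11) (ha12 : 0 ≤ a12) (ha21 : 0 ≤ a21) (ha22 : 0 ≤ a22)
    (hC₁ : 0 ≤ C₁) (hC₂ : 0 ≤ C₂) {x : Fin 2 → ℝ}
    (hx : !![μ * lamL - a11 * μ ^ 2, -(a12 * μ ^ (2 * κ));
        -(a21 * μ ^ (1 + 2 * κ)), (1 - ρ) - a22 * μ ^ (1 + 2 * κ)] *ᵥ x =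
      ![C₁ * μ ^ 2, C₂ * μ ^ (1 + 2 * κ)]) :
    x 0 ≤ stabilityConstant lamL ρ a12 a21 C₁ C₂ * μ ∧
      x 1 ≤ stabilityConstant lamL ρ a12 a21 C₁ C₂ * μ ^ (1 + 2 * κ) := by
  obtain ⟨hx₀, hx₁⟩ := det_mul_eq_of_mulVec_fin_two hx
  have hμ := h.pos
  have hρ' : 0 < 1 - ρ := by linarith
  have hdet := h.mul_le_det hlamL hρ₁ hκ ha12 ha21 ha22
  have hK : 0 ≤ (1 - ρ) * C₁ + a12 * C₂ + lamL * C₂ + a21 * C₁ + 1 := by positivity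
  have hP : 0 < μ ^ (1 + 2 * κ) := Real.rpow_pos_of_pos hμ _
  have hQP := Real.rpow_two_mul_mul_rpow_one_add_two_mul_le_sq hμ h.le_one hκ
  constructor
  · refine le_div_mul_of_le_of_mul_le (by positivity) hμ hdet hK hμ.le ?_
    rw [hx₀]
    have hs : (1 - ρ) - a22 * μ ^ (1 + 2 * κ) ≤ 1 - ρ :=
      sub_le_self _ (mul_nonneg ha22 hP.le)
    nlinarith [mul_le_mul_of_nonneg_right hs (mul_nonneg hC₁ (sq_nonneg μ)),
      mul_le_mul_of_nonneg_left hQP (mul_nonneg ha12 hC₂), mul_nonneg hρ'.le hC₁,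
      mul_nonneg ha21 hC₁, mul_nonneg hlamL.le hC₂]
  · refine le_div_mul_of_le_of_mul_le (by positivity) hμ hdet hK hP.le ?_
    rw [hx₁]
    have hμ₂ : μ ^ 2 ≤ μ := by nlinarith [h.le_one]
    nlinarith [mul_nonneg (mul_nonneg ha11 (sq_nonneg μ)) (mul_nonneg hC₂ hP.le),
      mul_le_mul_of_nonneg_left hμ₂ (mul_nonneg (mul_nonneg ha21 hC₁) hP.le),
      mul_nonneg hρ'.le hC₁, mul_nonneg ha12 hC₂, mul_pos hμ hP]

end SmallStep

theorem stmt_18_general (lamL ρ κ a11 a12 a21 a22 C₁ C₂ : ℝ)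
    (hlamL : 0 < lamL) (hρ1 : ρ < 1)
    (hκ0 : 1 / 4 < κ)
    (ha11 : 0 ≤ a11) (ha12 : 0 ≤ a12) (ha21 : 0 ≤ a21) (ha22 : 0 ≤ a22)
    (hC₁ : 0 ≤ C₁) (hC₂ : 0 ≤ C₂) :
    ∃ C > 0, ∃ μ₀ > 0, ∀ μ : ℝ, 0 < μ → μ < μ₀ →
      ∀ x : Fin 2 → ℝ,
        (!![μ * lamL - a11 * μ ^ 2, -(a12 * μ ^ (2 * κ));
            -(a21 * μ ^ (1 + 2 * κ)), (1 - ρ) - a22 * μ ^ (1 + 2 * κ)] :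
          Matrix (Fin 2) (Fin 2) ℝ).mulVec x = ![C₁ * μ ^ 2, C₂ * μ ^ (1 + 2 * κ)] →
        x 0 ≤ C * μ ∧ x 1 ≤ C * μ ^ (1 + 2 * κ) := by
  obtain ⟨μ₀, hμ₀, hsmall⟩ :=
    mem_nhdsGT_iff_exists_Ioo_subset.1 (eventually_smallStep hlamL hρ1 a11 a12 a21 a22)
  exact ⟨_, stabilityConstant_pos hlamL hρ1 ha12 ha21 hC₁ hC₂, μ₀, hμ₀, fun μ hμ hμμ₀ x hx =>
    (hsmall ⟨hμ, hμμ₀⟩).solution_le hlamL hρ1 hκ0.le ha11 ha12 ha21 ha22 hC₁ hC₂ hx⟩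

/-- Inverse scaling of the stability matrix. With
`I − Γ(μ) = [[μλL − a₁₁μ², −a₁₂μ^{2κ}], [−a₂₁μ^{1+2κ}, (1−ρ) − a₂₂μ^{1+2κ}]]`,
`λL > 0`, `0 < ρ < 1`, `1/4 < κ < 1/2` and nonnegative constants `aᵢⱼ, C₁, C₂`, there
is a constant `C > 0` independent of `μ` such that for all sufficiently small `μ > 0`,
any solution `x` of `(I − Γ(μ)) x = (C₁μ², C₂μ^{1+2κ})` satisfies `x 0 ≤ Cμ` and
`x 1 ≤ Cμ^{1+2κ}`. -/
theorem stmt_18 (lamL ρ κ a11 a12 a21 a22 C₁ C₂ : ℝ)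
    (hlamL : 0 < lamL) (hρ0 : 0 < ρ) (hρ1 : ρ < 1)
    (hκ0 : 1 / 4 < κ) (hκ1 : κ < 1 / 2)
    (ha11 : 0 ≤ a11) (ha12 : 0 ≤ a12) (ha21 : 0 ≤ a21) (ha22 : 0 ≤ a22)
    (hC₁ : 0 ≤ C₁) (hC₂ : 0 ≤ C₂) :
    ∃ C > 0, ∃ μ₀ > 0, ∀ μ : ℝ, 0 < μ → μ < μ₀ →
      ∀ x : Fin 2 → ℝ,
        (!![μ * lamL - a11 * μ ^ 2, -(a12 * μ ^ (2 * κ));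
            -(a21 * μ ^ (1 + 2 * κ)), (1 - ρ) - a22 * μ ^ (1 + 2 * κ)] :
          Matrix (Fin 2) (Fin 2) ℝ).mulVec x = ![C₁ * μ ^ 2, C₂ * μ ^ (1 + 2 * κ)] →
        x 0 ≤ C * μ ∧ x 1 ≤ C * μ ^ (1 + 2 * κ) :=
  stmt_18_general lamL ρ κ a11 a12 a21 a22 C₁ C₂ hlamL hρ1 hκ0 ha11 ha12 ha21 ha22 hC₁ hC₂
end
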